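/- Let A ∈ {0,1}^{m×n} be a matrix in which every row has exactly two ones (the edge-node incidence matrix of a graph). Two distinct vertices v and v' of Q*(A) are adjacent if and only if their joint saturation graph G(v,v') is connected. -/

import Mathlib

open Finset

/-- Support of a vector. -/
def supp {n : ℕ} (x : Fin n → ℝ) : Set (Fin n) := {j | x j ≠ 0}

/-- Support of the `t`-th row of a matrix. -/
def rowSupp {m n : ℕ} (A : Matrix (Fin m) (Fin n) ℝ) (t : Fin m) : Set (Fin n) :=
  {j | A t j ≠ 0}

def IsBinaryMatrix {m n : ℕ} (A : Matrix (Fin m) (Fin n) ℝ) : Prop :=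
  ∀ t j, A t j = 0 ∨ A t j = 1

def IsBinaryVec {n : ℕ} (x : Fin n → ℝ) : Prop := ∀ j, x j = 0 ∨ x j = 1

/-- The polyhedron `{x | A x ≥ b, x ≥ 0}`. -/
def polyP {m n : ℕ} (A : Matrix (Fin m) (Fin n) ℝ) (b : Fin m → ℝ) : Set (Fin n → ℝ) :=
  {x | (∀ i, b i ≤ ∑ j, A i j * x j) ∧ ∀ j, 0 ≤ x j}

/-- The linear relaxation `Q(A) = {x | A x ≥ 1, x ≥ 0}`. -/
def polyQ {m n : ℕ} (A : Matrix (Fin m) (Fin n) ℝ) : Set (Fin n → ℝ) :=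
  {x | (∀ i, 1 ≤ ∑ j, A i j * x j) ∧ ∀ j, 0 ≤ x j}

/-- The set covering polyhedron `Q*(A)`: convex hull of nonnegative integer solutions of
`A x ≥ 1`. -/
def Qstar {m n : ℕ} (A : Matrix (Fin m) (Fin n) ℝ) : Set (Fin n → ℝ) :=
  convexHull ℝ {x | (∀ j, ∃ k : ℕ, x j = k) ∧ ∀ i, 1 ≤ ∑ j, A i j * x j}

/-- A vertex of a convex set is an extreme point. -/
def IsVertex {n : ℕ} (S : Set (Fin n → ℝ)) (v : Fin n → ℝ) : Prop :=
  v ∈ S.extremePoints ℝ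

/-- Two distinct vertices are adjacent when they lie on a common edge, i.e. the segment
joining them is a face (extreme subset) of `S`. -/
def AdjacentVerts {n : ℕ} (S : Set (Fin n → ℝ)) (v w : Fin n → ℝ) : Prop :=
  v ≠ w ∧ IsVertex S v ∧ IsVertex S w ∧ IsExtreme ℝ S (segment ℝ v w)

/-- There is a row support `C` with `C ∩ supp v = {p}` and `C ∩ supp v' = {p'}`. -/
def jsgEdge {m n : ℕ} (A : Matrix (Fin m) (Fin n) ℝ) (v v' : Fin n → ℝ)
    (p p' : Fin n) : Prop :=
  ∃ t, rowSupp A t ∩ supp v = {p} ∧ rowSupp A t ∩ supp v' = {p'}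

/-- The joint saturation graph of `v` and `v'` with respect to `A`. -/
def JSG {m n : ℕ} (A : Matrix (Fin m) (Fin n) ℝ) (v v' : Fin n → ℝ) :
    SimpleGraph (Fin n) where
  Adj p p' := p ≠ p' ∧ (jsgEdge A v v' p p' ∨ jsgEdge A v v' p' p)
  symm := by constructor; intro p p' h; exact ⟨h.1.symm, h.2.symm⟩
  loopless := by constructor; intro p h; exact h.1 rfl

/-- The node set of the joint saturation graph: the symmetric difference of the supports. -/
def jsgNodes {n : ℕ} (v v' : Fin n → ℝ) : Set (Fin n) :=
  (supp v \ supp v') ∪ (supp v' \ supp v)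

def JSGConnected {m n : ℕ} (A : Matrix (Fin m) (Fin n) ℝ) (v v' : Fin n → ℝ) : Prop :=
  ∀ p ∈ jsgNodes v v', ∀ q ∈ jsgNodes v v', (JSG A v v').Reachable p q

/-- One of the two partite sets is contained in a single connected component. -/
def JSGPartiteConnected {m n : ℕ} (A : Matrix (Fin m) (Fin n) ℝ) (v v' : Fin n → ℝ) : Prop :=
  (∀ p ∈ supp v \ supp v', ∀ q ∈ supp v \ supp v', (JSG A v v').Reachable p q) ∨
  (∀ p ∈ supp v' \ supp v, ∀ q ∈ supp v' \ supp v, (JSG A v v').Reachable p q)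

/-- Exactly two components, one of which is an isolated node. -/
def JSGAlmostConnected {m n : ℕ} (A : Matrix (Fin m) (Fin n) ℝ) (v v' : Fin n → ℝ) : Prop :=
  ∃ q ∈ jsgNodes v v', (∀ p, ¬ (JSG A v v').Adj q p) ∧ (jsgNodes v v' \ {q}).Nonempty ∧
    ∀ p ∈ jsgNodes v v' \ {q}, ∀ r ∈ jsgNodes v v' \ {q}, (JSG A v v').Reachable p r

/-- The (directed) circular arc from `i` to `j` in `Fin n`. -/
def arc {n : ℕ} [NeZero n] (i j : Fin n) : Set (Fin n) :=
  {k | ∃ h : ℕ, h ≤ ((j - i : Fin n) : ℕ) ∧ k = i + (Fin.ofNat n h)}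

/-- A matrix is row circular if each row support is a circular arc. -/
def RowCircular {m n : ℕ} [NeZero n] (A : Matrix (Fin m) (Fin n) ℝ) : Prop :=
  ∀ t, ∃ i j : Fin n, rowSupp A t = arc i j

/-- The standard assumptions: binary, no dominating rows, between 2 and n-1 ones per row,
no all-zero or all-one column. -/
def StandardAssumptions {m n : ℕ} (A : Matrix (Fin m) (Fin n) ℝ) : Prop :=
  IsBinaryMatrix A ∧
  (∀ s t : Fin m, s ≠ t → ¬ rowSupp A s ⊆ rowSupp A t) ∧
  (∀ t, 2 ≤ (rowSupp A t).ncard ∧ (rowSupp A t).ncard ≤ n - 1) ∧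
  (∀ j : Fin n, (∃ t, A t j ≠ 0) ∧ (∃ t, A t j = 0))

/-- `a` and `b` occur consecutively (in either order) in the list `l`. -/
def ListConsec {α : Type*} (l : List α) (a b : α) : Prop :=
  ∃ k : ℕ, (l[k]? = some a ∧ l[k+1]? = some b) ∨ (l[k]? = some b ∧ l[k+1]? = some a)

/-- `a` and `b` occur cyclically consecutively (in either order) in the list `l`. -/
def CycConsec {α : Type*} (l : List α) (a b : α) : Prop :=
  ∃ k : ℕ, k < l.length ∧
    ((l[k]? = some a ∧ l[(k+1) % l.length]? = some b) ∨
     (l[k]? = some b ∧ l[(k+1) % l.length]? = some a))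

/-- The set `S` induces a path (possibly a single node) in `G`. -/
def IsPathOn {n : ℕ} (G : SimpleGraph (Fin n)) (S : Set (Fin n)) : Prop :=
  ∃ l : List (Fin n), l.Nodup ∧ (∀ x, x ∈ S ↔ x ∈ l) ∧
    (∀ a b, a ∈ S → G.Adj a b → ListConsec l a b) ∧
    (∀ a b, ListConsec l a b → G.Adj a b)

/-- The set `S` induces a cycle in `G`. -/
def IsCycleOn {n : ℕ} (G : SimpleGraph (Fin n)) (S : Set (Fin n)) : Prop :=
  ∃ l : List (Fin n), 3 ≤ l.length ∧ l.Nodup ∧ (∀ x, x ∈ S ↔ x ∈ l) ∧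
    (∀ a b, a ∈ S → G.Adj a b → CycConsec l a b) ∧
    (∀ a b, CycConsec l a b → G.Adj a b)

/-- `p` and `q` are cyclically consecutive elements of `S`. -/
def CyclConsecIn {n : ℕ} [NeZero n] (S : Set (Fin n)) (p q : Fin n) : Prop :=
  p ≠ q ∧ p ∈ S ∧ q ∈ S ∧ (arc p q ∩ S = {p, q} ∨ arc q p ∩ S = {p, q})

/-- The circulant matrix `C(n,2)` with row supports `{t, t+1}` (mod n). -/
def Cn2 (n : ℕ) [NeZero n] : Matrix (Fin n) (Fin n) ℝ :=
  fun t j => if j = t ∨ j = t + 1 then 1 else 0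

/-- Append a row to a matrix. -/
def appendRow {m n : ℕ} (A : Matrix (Fin m) (Fin n) ℝ) (a : Fin n → ℝ) :
    Matrix (Fin (m+1)) (Fin n) ℝ :=
  fun t j => if h : (t : ℕ) < m then A ⟨t, h⟩ j else a j

/-- A set of points is integral if all its extreme points are integer vectors. -/
def IsIntegralSet {n : ℕ} (S : Set (Fin n → ℝ)) : Prop :=
  ∀ x ∈ S.extremePoints ℝ, ∀ j, ∃ z : ℤ, x j = z

/-- A binary matrix is minimally nonideal if `Q(A)` is not integral but both restrictions
`Q(A) ∩ {x_i = 0}` and `Q(A) ∩ {x_i = 1}` are integral for every coordinate `i`. -/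
def MinimallyNonideal {m n : ℕ} (A : Matrix (Fin m) (Fin n) ℝ) : Prop :=
  ¬ IsIntegralSet (polyQ A) ∧
  ∀ i : Fin n, IsIntegralSet (polyQ A ∩ {x | x i = 0}) ∧
               IsIntegralSet (polyQ A ∩ {x | x i = 1})

/-- The matrix of the degenerate projective plane with `t+1` points and lines. -/
def Jmat (t : ℕ) : Matrix (Fin (t+1)) (Fin (t+1)) ℝ :=
  fun i j => if i = 0 then (if j = 0 then 0 else 1) else (if j = 0 ∨ j = i then 1 else 0)

/-- `A` is isomorphic to some degenerate projective plane matrix `J_t`, `t ≥ 2`. -/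
def IsoToDegenProjPlane {m n : ℕ} (A : Matrix (Fin m) (Fin n) ℝ) : Prop :=
  ∃ t : ℕ, 2 ≤ t ∧ ∃ (σ : Fin m ≃ Fin (t+1)) (τ : Fin n ≃ Fin (t+1)),
    ∀ i j, A i j = Jmat t (σ i) (τ j)

/-- `A₁` is the core of `A`: a square nonsingular row submatrix with `r` ones per row and
per column, all other rows of `A` having more than `r` ones. -/
def IsCore {m n : ℕ} (A : Matrix (Fin m) (Fin n) ℝ) (A₁ : Matrix (Fin n) (Fin n) ℝ)
    (r : ℕ) : Prop :=
  2 ≤ r ∧ A₁.det ≠ 0 ∧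
  (∃ f : Fin n → Fin m, Function.Injective f ∧ (∀ i, A₁ i = A (f i)) ∧
    ∀ t, t ∉ Set.range f → r < (rowSupp A t).ncard) ∧
  (∀ i, (rowSupp A₁ i).ncard = r) ∧ (∀ j, {i | A₁ i j ≠ 0}.ncard = r)

/-- `B₁` is the core of the blocker of `A`: a square nonsingular matrix whose rows are
binary vertices of `Q*(A)` with `s` ones per row and per column, all other binary
vertices of `Q*(A)` having more than `s` ones. -/
def IsBlockerCore {m n : ℕ} (A : Matrix (Fin m) (Fin n) ℝ) (B₁ : Matrix (Fin n) (Fin n) ℝ)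
    (s : ℕ) : Prop :=
  2 ≤ s ∧ B₁.det ≠ 0 ∧
  (∀ i, IsBinaryVec (B₁ i) ∧ IsVertex (Qstar A) (B₁ i)) ∧
  Function.Injective (fun i => B₁ i) ∧
  (∀ i, (rowSupp B₁ i).ncard = s) ∧ (∀ j, {i | B₁ i j ≠ 0}.ncard = s) ∧
  (∀ x, IsBinaryVec x → IsVertex (Qstar A) x → (∀ i, x ≠ B₁ i) → s < (supp x).ncard)

/-- `w^i` for `n = 3ν`: the complement of the characteristic vector of the residue class
`i` mod 3. -/
def wVec (n : ℕ) (i : Fin 3) : Fin n → ℝ :=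
  fun k => if (k : ℕ) % 3 = (i : ℕ) then 0 else 1

/-- `a^i` for `n = 3ν`: the characteristic vector of the residue class `i` mod 3
(`a¹ = (1,0,0,1,0,0,…)` corresponds to `i = 0`). -/
def aVec (n : ℕ) (i : ℕ) : Fin n → ℝ :=
  fun k => if (k : ℕ) % 3 = i then 1 else 0

/-! Vertices of `Q*(A)` are binary, and every `j ∈ supp v` lies in a row `{j, b}` with
`v b = 0`; otherwise `v ± e_j` would both be integer covers.

If `G(v,v')` is disconnected, exchanging `v` and `v'` on one component yields two integer
covers with the same midpoint as `v` and `v'`, so `[v, v']` is not a face.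

If `G(v,v')` is connected, consider an integer cover `w` that is tight on every row tight for
both `v` and `v'` and vanishes wherever both vanish. Each edge `p ~ p'` of `G(v,v')` is such a
row `{p, p'}`, so `w` agrees with `v` at both ends or with `v'` at both ends; by connectivity
`w` agrees with `v` or with `v'` on all of `supp v △ supp v'`. The rows `{j, b}` above then
force `w ≥ 1` on `supp v ∩ supp v'`, and `w ∈ {v, v'}` once equality holds there. Two
successive linear minimizations therefore cut `[v, v']` out of `Q*(A)` as a face of a face. -/

open Finset Matrix

section LinearFace

variable {E : Type*} [AddCommGroup E] [Module ℝ E] {K S : Set E} {f : E →ₗ[ℝ] ℝ} {γ : ℝ}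

theorem isExtreme_sep_eq_of_forall_le (hf : ∀ x ∈ K, γ ≤ f x) :
    IsExtreme ℝ K {x ∈ K | f x = γ} := by
  refine ⟨Set.sep_subset _ _, ?_⟩
  rintro x hx y hy z ⟨-, hz⟩ ⟨a, b, ha, hb, hab, rfl⟩
  have hsum : a * (f x - γ) + b * (f y - γ) = 0 := by
    simp only [map_add, map_smul, smul_eq_mul] at hz
    linear_combination hz - γ * hab
  have hx' := ((add_eq_zero_iff_of_nonneg (mul_nonneg ha.le (sub_nonneg.2 (hf x hx)))
    (mul_nonneg hb.le (sub_nonneg.2 (hf y hy)))).1 hsum).1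
  exact ⟨hx, sub_eq_zero.1 ((mul_eq_zero.1 hx').resolve_left ha.ne')⟩

theorem le_of_mem_convexHull (hf : ∀ x ∈ S, γ ≤ f x) {x : E} (hx : x ∈ convexHull ℝ S) :
    γ ≤ f x :=
  convexHull_min hf (convex_halfSpace_ge f.isLinear γ) hx

theorem convexHull_sep_eq_of_forall_le (hf : ∀ x ∈ S, γ ≤ f x) :
    {x ∈ convexHull ℝ S | f x = γ} = convexHull ℝ (S ∩ {x | f x = γ}) := by
  refine Set.Subset.antisymm ?_ fun x hx => ⟨convexHull_mono Set.inter_subset_left hx,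
    convexHull_min Set.inter_subset_right (convex_hyperplane f.isLinear γ) hx⟩
  let C := {x ∈ convexHull ℝ S | f x = γ → x ∈ convexHull ℝ (S ∩ {x | f x = γ})}
  have hSC : S ⊆ C := fun x hx =>
    ⟨subset_convexHull ℝ S hx, fun hfx => subset_convexHull ℝ _ ⟨hx, hfx⟩⟩
  -- `C` is convex because the level set is a face of `convexHull ℝ S`.
  have hC : Convex ℝ C := by
    refine convex_iff_openSegment_subset.2 fun x hx y hy z hz => ?_
    have hzS := (convex_convexHull ℝ S).openSegment_subset hx.1 hy.1 hz
    refine ⟨hzS, fun hfz => ?_⟩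
    have hface := isExtreme_sep_eq_of_forall_le fun _ => le_of_mem_convexHull hf
    have hfx := (hface.left_mem_of_mem_openSegment hx.1 hy.1 ⟨hzS, hfz⟩ hz).2
    have hfy := (hface.right_mem_of_mem_openSegment hx.1 hy.1 ⟨hzS, hfz⟩ hz).2
    exact (convex_convexHull ℝ _).openSegment_subset (hx.2 hfx) (hy.2 hfy) hz
  exact fun x hx => (convexHull_min hSC hC hx.1).2 hx.2

theorem isExtreme_convexHull_inter_of_forall_le (hf : ∀ x ∈ S, γ ≤ f x) :
    IsExtreme ℝ (convexHull ℝ S) (convexHull ℝ (S ∩ {x | f x = γ})) :=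
  convexHull_sep_eq_of_forall_le hf ▸
    isExtreme_sep_eq_of_forall_le fun _ => le_of_mem_convexHull hf

end LinearFace

variable {m n : ℕ} {A : Matrix (Fin m) (Fin n) ℝ} {v v' w : Fin n → ℝ} {a b j p q : Fin n}
  {t : Fin m}

def integerCovers (A : Matrix (Fin m) (Fin n) ℝ) : Set (Fin n → ℝ) :=
  {x | (∀ j, ∃ k : ℕ, x j = k) ∧ ∀ i, 1 ≤ (A *ᵥ x) i}

theorem Qstar_eq_convexHull_integerCovers (A : Matrix (Fin m) (Fin n) ℝ) :
    Qstar A = convexHull ℝ (integerCovers A) :=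
  rfl

section IntegerCovers

theorem nonneg_of_mem_integerCovers (hw : w ∈ integerCovers A) (j : Fin n) : 0 ≤ w j := by
  obtain ⟨k, hk⟩ := hw.1 j
  exact hk ▸ k.cast_nonneg

theorem one_le_of_mem_integerCovers (hw : w ∈ integerCovers A) (hj : w j ≠ 0) : 1 ≤ w j := by
  obtain ⟨k, hk⟩ := hw.1 j
  rw [hk] at hj ⊢
  exact Nat.one_le_cast.2 (Nat.pos_of_ne_zero (by exact_mod_cast hj))

theorem eq_zero_of_mem_integerCovers (hw : w ∈ integerCovers A) (hj : w j < 1) : w j = 0 := by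
  by_contra h
  exact (one_le_of_mem_integerCovers hw h).not_gt hj

theorem IsBinaryMatrix.nonneg (hA : IsBinaryMatrix A) (i : Fin m) (j : Fin n) : 0 ≤ A i j := by
  rcases hA i j with h | h <;> simp [h]

theorem add_single_mem_integerCovers (hA : IsBinaryMatrix A) (hw : w ∈ integerCovers A)
    (j : Fin n) : w + Pi.single j 1 ∈ integerCovers A := by
  refine ⟨fun l => ?_, fun i => ?_⟩
  · obtain ⟨k, hk⟩ := hw.1 l
    by_cases hl : l = j
    · subst hl
      exact ⟨k + 1, by simp [hk]⟩
    · exact ⟨k, by simp [hk, hl]⟩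
  · rw [Matrix.mulVec_add, Matrix.mulVec_single_one, Pi.add_apply, Matrix.col_apply]
    linarith [hw.2 i, hA.nonneg i j]

theorem mem_integerCovers_of_isVertex (hv : IsVertex (Qstar A) v) : v ∈ integerCovers A :=
  extremePoints_convexHull_subset hv

theorem exists_tight_row_of_isVertex (hA : IsBinaryMatrix A) (hv : IsVertex (Qstar A) v)
    (hj : v j ≠ 0) : ∃ i, A i j = 1 ∧ (A *ᵥ v) i < 2 := by
  have hvS := mem_integerCovers_of_isVertex hv
  by_contra! h
  have hsub : v - Pi.single j 1 ∈ integerCovers A := by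
    refine ⟨fun l => ?_, fun i => ?_⟩
    · obtain ⟨k, hk⟩ := hvS.1 l
      by_cases hl : l = j
      · subst hl
        have hk1 : 1 ≤ k := by exact_mod_cast hk ▸ one_le_of_mem_integerCovers hvS hj
        exact ⟨k - 1, by simp [hk, Nat.cast_sub hk1]⟩
      · exact ⟨k, by simp [hk, hl]⟩
    · rw [Matrix.mulVec_sub, Matrix.mulVec_single_one, Pi.sub_apply, Matrix.col_apply]
      rcases hA i j with h0 | h1
      · rw [h0, sub_zero]
        exact hvS.2 i
      · linarith [h i h1]
  have hmid : v ∈ openSegment ℝ (v - Pi.single j 1) (v + Pi.single j 1) :=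
    ⟨1 / 2, 1 / 2, by norm_num, by norm_num, by norm_num, by module⟩
  have hext := (mem_extremePoints.1 hv).2 _ (subset_convexHull ℝ _ hsub) _
    (subset_convexHull ℝ _ (add_single_mem_integerCovers hA hvS j)) hmid
  simpa using congrFun hext.1 j

theorem isBinaryVec_of_isVertex (hA : IsBinaryMatrix A) (hv : IsVertex (Qstar A) v) :
    IsBinaryVec v := by
  intro j
  refine or_iff_not_imp_left.2 fun hj => ?_
  have hvS := mem_integerCovers_of_isVertex hv
  obtain ⟨i, hij, hi⟩ := exists_tight_row_of_isVertex hA hv hj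
  have hle : v j ≤ (A *ᵥ v) i :=
    calc v j = A i j * v j := by rw [hij, one_mul]
      _ ≤ ∑ l, A i l * v l := Finset.single_le_sum
          (fun l _ => mul_nonneg (hA.nonneg i l) (nonneg_of_mem_integerCovers hvS l))
          (Finset.mem_univ j)
  obtain ⟨k, hk⟩ := hvS.1 j
  rw [hk] at hj hle ⊢
  have hk2 : k < 2 := by exact_mod_cast hle.trans_lt hi
  have hk0 : k ≠ 0 := by rintro rfl; simp at hj
  obtain rfl : k = 1 := by omega
  simp

end IntegerCovers

section TwoOnesPerRow

theorem exists_rowSupp_eq_pair_left (h2 : ∀ t, (rowSupp A t).ncard = 2)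
    (hj : j ∈ rowSupp A t) : ∃ b, b ≠ j ∧ rowSupp A t = {j, b} := by
  obtain ⟨a, b, hab, hrow⟩ := Set.ncard_eq_two.1 (h2 t)
  rw [hrow] at hj
  rcases hj with rfl | rfl
  · exact ⟨b, hab.symm, hrow⟩
  · exact ⟨a, hab, hrow.trans (Set.pair_comm _ _)⟩

theorem mulVec_apply_eq_add_of_rowSupp_eq_pair (hA : IsBinaryMatrix A) (hab : a ≠ b)
    (hrow : rowSupp A t = {a, b}) (x : Fin n → ℝ) : (A *ᵥ x) t = x a + x b := by
  have hone : ∀ j ∈ rowSupp A t, A t j = 1 := fun j hj => (hA t j).resolve_left hj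
  have hzero : ∀ j ∉ ({a, b} : Finset (Fin n)), A t j * x j = 0 := fun j hj => by
    have hj' : j ∉ rowSupp A t := by simpa [hrow] using hj
    rw [not_not.1 hj', zero_mul]
  calc (A *ᵥ x) t = ∑ j ∈ {a, b}, A t j * x j :=
        (Finset.sum_subset (Finset.subset_univ _) fun j _ hj => hzero j hj).symm
    _ = x a + x b := by
        rw [Finset.sum_pair hab, hone a (by simp [hrow]), hone b (by simp [hrow]), one_mul,
          one_mul]

theorem exists_critical_row (hA : IsBinaryMatrix A) (h2 : ∀ t, (rowSupp A t).ncard = 2)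
    (hv : IsVertex (Qstar A) v) (hj : v j ≠ 0) :
    ∃ t b, b ≠ j ∧ rowSupp A t = {j, b} ∧ v b = 0 := by
  obtain ⟨t, htj, ht⟩ := exists_tight_row_of_isVertex hA hv hj
  obtain ⟨b, hbj, hrow⟩ :=
    exists_rowSupp_eq_pair_left h2 (show j ∈ rowSupp A t by simp [rowSupp, htj])
  have hvS := mem_integerCovers_of_isVertex hv
  rw [mulVec_apply_eq_add_of_rowSupp_eq_pair hA hbj.symm hrow] at ht
  refine ⟨t, b, hbj, hrow, eq_zero_of_mem_integerCovers hvS ?_⟩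
  linarith [one_le_of_mem_integerCovers hvS hj]

end TwoOnesPerRow

section JointSaturationGraph

theorem JSG_comm (A : Matrix (Fin m) (Fin n) ℝ) (v v' : Fin n → ℝ) :
    JSG A v v' = JSG A v' v := by
  have hswap : ∀ p q, jsgEdge A v v' p q ↔ jsgEdge A v' v q p := fun p q =>
    ⟨fun ⟨t, h, h'⟩ => ⟨t, h', h⟩, fun ⟨t, h, h'⟩ => ⟨t, h', h⟩⟩
  ext p q
  simp only [JSG, hswap]
  tauto

theorem jsgNodes_comm (v v' : Fin n → ℝ) : jsgNodes v v' = jsgNodes v' v :=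
  Set.union_comm _ _

theorem ne_of_mem_jsgNodes (hp : p ∈ jsgNodes v v') : v p ≠ v' p := by
  rcases hp with ⟨h, h'⟩ | ⟨h, h'⟩
  · rw [not_not.1 h']
    exact h
  · rw [not_not.1 h']
    exact Ne.symm h

theorem rowSupp_inter_supp_eq_singleton (hrow : rowSupp A t = {a, b}) (ha : w a ≠ 0)
    (hb : w b = 0) : rowSupp A t ∩ supp w = {a} := by
  rw [hrow]
  ext j
  simp only [Set.mem_inter_iff, Set.mem_insert_iff, Set.mem_singleton_iff, supp,
    Set.mem_ofPred_eq]
  constructor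
  · rintro ⟨rfl | rfl, hj⟩
    · rfl
    · exact absurd hb hj
  · rintro rfl
    exact ⟨Or.inl rfl, ha⟩

theorem JSG_adj_of_rowSupp_eq_pair (hab : a ≠ b) (hrow : rowSupp A t = {a, b})
    (hva : v a ≠ 0) (hvb : v b = 0) (hv'a : v' a = 0) (hv'b : v' b ≠ 0) :
    (JSG A v v').Adj a b :=
  ⟨hab, Or.inl ⟨t, rowSupp_inter_supp_eq_singleton hrow hva hvb,
    rowSupp_inter_supp_eq_singleton (hrow.trans (Set.pair_comm a b)) hv'b hv'a⟩⟩

theorem jsgEdge.rowSupp_eq_pair (h2 : ∀ t, (rowSupp A t).ncard = 2) (hpq : p ≠ q)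
    (he : jsgEdge A v v' p q) :
    ∃ t, rowSupp A t = {p, q} ∧ v p ≠ 0 ∧ v q = 0 ∧ v' p = 0 ∧ v' q ≠ 0 := by
  obtain ⟨t, hvt, hv't⟩ := he
  have hp : p ∈ rowSupp A t ∩ supp v := hvt ▸ rfl
  have hq : q ∈ rowSupp A t ∩ supp v' := hv't ▸ rfl
  obtain ⟨b, -, hrow⟩ := exists_rowSupp_eq_pair_left h2 hp.1
  obtain rfl : q = b := by simpa [hrow, hpq.symm] using hq.1
  refine ⟨t, hrow, hp.2, ?_, ?_, hq.2⟩
  · by_contra hvq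
    have hq' : q ∈ rowSupp A t ∩ supp v := ⟨hq.1, hvq⟩
    rw [hvt] at hq'
    exact hpq hq'.symm
  · by_contra hv'p
    have hp' : p ∈ rowSupp A t ∩ supp v' := ⟨hp.1, hv'p⟩
    rw [hv't] at hp'
    exact hpq hp'

theorem mem_jsgNodes_of_JSG_adj (h2 : ∀ t, (rowSupp A t).ncard = 2)
    (hadj : (JSG A v v').Adj p q) : p ∈ jsgNodes v v' := by
  obtain ⟨hpq, he | he⟩ := hadj
  · obtain ⟨-, -, hvp, -, hv'p, -⟩ := he.rowSupp_eq_pair h2 hpq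
    exact Or.inl ⟨hvp, not_not.2 hv'p⟩
  · obtain ⟨-, -, -, hvp, -, hv'p⟩ := he.rowSupp_eq_pair h2 hpq.symm
    exact Or.inr ⟨hv'p, not_not.2 hvp⟩

theorem exists_JSG_adj_of_mem_sdiff (hA : IsBinaryMatrix A) (h2 : ∀ t, (rowSupp A t).ncard = 2)
    (hv : IsVertex (Qstar A) v) (hv' : v' ∈ integerCovers A) (hp : p ∈ supp v \ supp v') :
    ∃ q, (JSG A v v').Adj p q := by
  obtain ⟨t, b, hbp, hrow, hvb⟩ := exists_critical_row hA h2 hv hp.1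
  have hv'p : v' p = 0 := not_not.1 hp.2
  have hcov := hv'.2 t
  rw [mulVec_apply_eq_add_of_rowSupp_eq_pair hA hbp.symm hrow, hv'p, zero_add] at hcov
  exact ⟨b, JSG_adj_of_rowSupp_eq_pair hbp.symm hrow hp.1 hvb hv'p
    (zero_lt_one.trans_le hcov).ne'⟩

theorem exists_JSG_adj_of_mem_jsgNodes (hA : IsBinaryMatrix A)
    (h2 : ∀ t, (rowSupp A t).ncard = 2) (hv : IsVertex (Qstar A) v)
    (hv' : IsVertex (Qstar A) v') (hp : p ∈ jsgNodes v v') : ∃ q, (JSG A v v').Adj p q := by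
  rcases hp with hp | hp
  · exact exists_JSG_adj_of_mem_sdiff hA h2 hv (mem_integerCovers_of_isVertex hv') hp
  · rw [JSG_comm]
    exact exists_JSG_adj_of_mem_sdiff hA h2 hv' (mem_integerCovers_of_isVertex hv) hp

end JointSaturationGraph

section Disconnected

theorem piecewise_mem_integerCovers (hA : IsBinaryMatrix A) (h2 : ∀ t, (rowSupp A t).ncard = 2)
    (hv : v ∈ integerCovers A) (hv' : v' ∈ integerCovers A) {R : Set (Fin n)}
    [DecidablePred (· ∈ R)] (hR : ∀ a b, (JSG A v v').Adj a b → a ∈ R → b ∈ R) :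
    R.piecewise v' v ∈ integerCovers A := by
  have hcross : ∀ {t a b}, a ≠ b → rowSupp A t = {a, b} → a ∈ R → b ∉ R → 1 ≤ v' a + v b := by
    intro t a b hab hrow ha hb
    by_contra! hlt
    have hv'a : v' a = 0 :=
      eq_zero_of_mem_integerCovers hv' (by linarith [nonneg_of_mem_integerCovers hv b])
    have hvb : v b = 0 :=
      eq_zero_of_mem_integerCovers hv (by linarith [nonneg_of_mem_integerCovers hv' a])
    have hcov := hv.2 t
    have hcov' := hv'.2 t
    rw [mulVec_apply_eq_add_of_rowSupp_eq_pair hA hab hrow] at hcov hcov'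
    refine hb (hR a b (JSG_adj_of_rowSupp_eq_pair hab hrow ?_ hvb hv'a ?_) ha)
    · intro h
      linarith
    · intro h
      linarith
  refine ⟨fun j => ?_, fun t => ?_⟩
  · by_cases hj : j ∈ R
    · rw [Set.piecewise_eq_of_mem _ _ _ hj]
      exact hv'.1 j
    · rw [Set.piecewise_eq_of_notMem _ _ _ hj]
      exact hv.1 j
  · obtain ⟨a, b, hab, hrow⟩ := Set.ncard_eq_two.1 (h2 t)
    have hcov := hv.2 t
    have hcov' := hv'.2 t
    rw [mulVec_apply_eq_add_of_rowSupp_eq_pair hA hab hrow] at hcov hcov' ⊢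
    by_cases ha : a ∈ R <;> by_cases hb : b ∈ R <;>
      simp only [Set.piecewise_eq_of_mem, Set.piecewise_eq_of_notMem, ha, hb,
        not_false_eq_true]
    · exact hcov'
    · exact hcross hab hrow ha hb
    · rw [add_comm]
      exact hcross hab.symm (hrow.trans (Set.pair_comm a b)) hb ha
    · exact hcov

theorem JSGConnected_of_isExtreme_segment (hA : IsBinaryMatrix A)
    (h2 : ∀ t, (rowSupp A t).ncard = 2) (hv : v ∈ integerCovers A)
    (hv' : v' ∈ integerCovers A) (hface : IsExtreme ℝ (Qstar A) (segment ℝ v v')) :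
    JSGConnected A v v' := by
  classical
  intro p hp q hq
  by_contra hpq
  let R := {j | (JSG A v v').Reachable p j}
  have hpR : p ∈ R := SimpleGraph.Reachable.refl p
  have hR : ∀ a b, (JSG A v v').Adj a b → a ∈ R → b ∈ R := fun _ _ hab ha =>
    SimpleGraph.Reachable.trans ha hab.reachable
  have hu := piecewise_mem_integerCovers hA h2 hv hv' hR
  have hu' := piecewise_mem_integerCovers hA h2 hv' hv (R := R) (by rwa [← JSG_comm])
  have hmid : midpoint ℝ v v' ∈ openSegment ℝ (R.piecewise v' v) (R.piecewise v v') := by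
    refine ⟨1 / 2, 1 / 2, by norm_num, by norm_num, by norm_num, ?_⟩
    funext j
    by_cases hj : j ∈ R <;> simp [hj, midpoint_eq_smul_add] <;> ring
  obtain ⟨a, b, -, -, hab, huv⟩ := hface.left_mem_of_mem_openSegment (subset_convexHull ℝ _ hu)
    (subset_convexHull ℝ _ hu') (midpoint_mem_segment v v') hmid
  have hup := congrFun huv p
  have huq := congrFun huv q
  simp only [Pi.add_apply, Pi.smul_apply, smul_eq_mul, Set.piecewise_eq_of_mem _ _ _ hpR,
    Set.piecewise_eq_of_notMem _ _ _ (show q ∉ R from hpq)] at hup huq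
  have ha : a = 0 := (mul_eq_zero.1 (by linear_combination hup - v' p * hab :
    a * (v p - v' p) = 0)).resolve_right (sub_ne_zero.2 (ne_of_mem_jsgNodes hp))
  have hb : b = 0 := (mul_eq_zero.1 (by linear_combination huq - v q * hab :
    b * (v' q - v q) = 0)).resolve_right (sub_ne_zero.2 (ne_of_mem_jsgNodes hq).symm)
  simp [ha, hb] at hab

end Disconnected

section Connected

theorem agree_of_jsgEdge (hA : IsBinaryMatrix A) (h2 : ∀ t, (rowSupp A t).ncard = 2)
    (hvb : IsBinaryVec v) (hv'b : IsBinaryVec v') (hw : w ∈ integerCovers A)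
    (htight : ∀ t, (A *ᵥ v) t = 1 → (A *ᵥ v') t = 1 → (A *ᵥ w) t = 1)
    (hpq : p ≠ q) (he : jsgEdge A v v' p q) :
    (w p = v p ∧ w q = v q) ∨ (w p = v' p ∧ w q = v' q) := by
  obtain ⟨t, hrow, hvp, hvq, hv'p, hv'q⟩ := he.rowSupp_eq_pair h2 hpq
  rw [(hvb p).resolve_left hvp, (hv'b q).resolve_left hv'q, hvq, hv'p]
  have hsum := mulVec_apply_eq_add_of_rowSupp_eq_pair hA hpq hrow
  have hwpq : w p + w q = 1 := by
    rw [← hsum]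
    refine htight t ?_ ?_ <;> simp [hsum, hvq, hv'p, (hvb p).resolve_left hvp,
      (hv'b q).resolve_left hv'q]
  by_cases hwp : w p = 0
  · exact Or.inr ⟨hwp, by linarith⟩
  · have := one_le_of_mem_integerCovers hw hwp
    have := nonneg_of_mem_integerCovers hw q
    exact Or.inl ⟨by linarith, by linarith⟩

theorem eqOn_jsgNodes_or_eqOn (hA : IsBinaryMatrix A) (h2 : ∀ t, (rowSupp A t).ncard = 2)
    (hv : IsVertex (Qstar A) v) (hv' : IsVertex (Qstar A) v') (hcon : JSGConnected A v v')
    (hw : w ∈ integerCovers A)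
    (htight : ∀ t, (A *ᵥ v) t = 1 → (A *ᵥ v') t = 1 → (A *ᵥ w) t = 1) :
    (∀ j ∈ jsgNodes v v', w j = v j) ∨ (∀ j ∈ jsgNodes v v', w j = v' j) := by
  have hvb := isBinaryVec_of_isVertex hA hv
  have hv'b := isBinaryVec_of_isVertex hA hv'
  have hagree : ∀ p q, (JSG A v v').Adj p q →
      (w p = v p ∧ w q = v q) ∨ (w p = v' p ∧ w q = v' q) := by
    rintro p q ⟨hpq, he | he⟩
    · exact agree_of_jsgEdge hA h2 hvb hv'b hw htight hpq he
    · exact (agree_of_jsgEdge hA h2 hvb hv'b hw htight hpq.symm he).imp And.symm And.symm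
  have hstep : ∀ p q, (JSG A v v').Adj p q → (w p = v p ↔ w q = v q) := by
    intro p q hadj
    rcases hagree p q hadj with ⟨hwp, hwq⟩ | ⟨hwp, hwq⟩
    · exact iff_of_true hwp hwq
    · exact iff_of_false (hwp ▸ (ne_of_mem_jsgNodes (mem_jsgNodes_of_JSG_adj h2 hadj)).symm)
        (hwq ▸ (ne_of_mem_jsgNodes (mem_jsgNodes_of_JSG_adj h2 hadj.symm)).symm)
  have hreach : ∀ p q, (JSG A v v').Reachable p q → (w p = v p ↔ w q = v q) := by
    rintro p q ⟨W⟩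
    induction W with
    | nil => rfl
    | cons hadj _ ih => exact (hstep _ _ hadj).trans ih
  by_cases hall : ∀ j ∈ jsgNodes v v', w j = v j
  · exact Or.inl hall
  push Not at hall
  obtain ⟨p, hp, hwp⟩ := hall
  refine Or.inr fun j hj => ?_
  obtain ⟨q, hjq⟩ := exists_JSG_adj_of_mem_jsgNodes hA h2 hv hv' hj
  have hwj : w j ≠ v j := fun h => hwp ((hreach p j (hcon p hp j hj)).2 h)
  rcases hagree j q hjq with ⟨h, -⟩ | ⟨h, -⟩
  · exact absurd h hwj
  · exact h

theorem one_le_of_eqOn_jsgNodes (hA : IsBinaryMatrix A) (h2 : ∀ t, (rowSupp A t).ncard = 2)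
    (hv : IsVertex (Qstar A) v) (hw : w ∈ integerCovers A)
    (hZ : ∀ j, v j = 0 → v' j = 0 → w j = 0) (hwv : ∀ j ∈ jsgNodes v v', w j = v j)
    (hj : v j ≠ 0) : 1 ≤ w j := by
  obtain ⟨t, b, hbj, hrow, hvb⟩ := exists_critical_row hA h2 hv hj
  have hwb : w b = 0 := by
    by_cases hv'b : v' b = 0
    · exact hZ b hvb hv'b
    · rw [hwv b (Or.inr ⟨hv'b, fun h => h hvb⟩), hvb]
  have hcov := hw.2 t
  rwa [mulVec_apply_eq_add_of_rowSupp_eq_pair hA hbj.symm hrow, hwb, add_zero] at hcov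

theorem eq_of_eqOn_jsgNodes (hvb : IsBinaryVec v) (hv'b : IsBinaryVec v')
    (hZ : ∀ j, v j = 0 → v' j = 0 → w j = 0) (hwv : ∀ j ∈ jsgNodes v v', w j = v j)
    (hI : ∀ j, v j ≠ 0 → v' j ≠ 0 → w j = 1) : w = v := by
  funext j
  by_cases hj : j ∈ jsgNodes v v'
  · exact hwv j hj
  rcases hvb j with h | h <;> rcases hv'b j with h' | h'
  · rw [hZ j h h', h]
  · simp [jsgNodes, supp, h, h'] at hj
  · simp [jsgNodes, supp, h, h'] at hj
  · rw [hI j (by simp [h]) (by simp [h']), h]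

theorem one_le_of_tight (hA : IsBinaryMatrix A) (h2 : ∀ t, (rowSupp A t).ncard = 2)
    (hv : IsVertex (Qstar A) v) (hv' : IsVertex (Qstar A) v') (hcon : JSGConnected A v v')
    (hw : w ∈ integerCovers A)
    (htight : ∀ t, (A *ᵥ v) t = 1 → (A *ᵥ v') t = 1 → (A *ᵥ w) t = 1)
    (hZ : ∀ j, v j = 0 → v' j = 0 → w j = 0) (hvj : v j ≠ 0) (hv'j : v' j ≠ 0) : 1 ≤ w j := by
  rcases eqOn_jsgNodes_or_eqOn hA h2 hv hv' hcon hw htight with hwv | hwv'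
  · exact one_le_of_eqOn_jsgNodes hA h2 hv hw hZ hwv hvj
  · exact one_le_of_eqOn_jsgNodes hA h2 hv' hw (fun j h h' => hZ j h' h)
      (jsgNodes_comm v v' ▸ hwv') hv'j

theorem eq_or_eq_of_tight (hA : IsBinaryMatrix A) (h2 : ∀ t, (rowSupp A t).ncard = 2)
    (hv : IsVertex (Qstar A) v) (hv' : IsVertex (Qstar A) v') (hcon : JSGConnected A v v')
    (hw : w ∈ integerCovers A)
    (htight : ∀ t, (A *ᵥ v) t = 1 → (A *ᵥ v') t = 1 → (A *ᵥ w) t = 1)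
    (hZ : ∀ j, v j = 0 → v' j = 0 → w j = 0) (hI : ∀ j, v j ≠ 0 → v' j ≠ 0 → w j = 1) :
    w = v ∨ w = v' := by
  have hvb := isBinaryVec_of_isVertex hA hv
  have hv'b := isBinaryVec_of_isVertex hA hv'
  rcases eqOn_jsgNodes_or_eqOn hA h2 hv hv' hcon hw htight with hwv | hwv'
  · exact Or.inl (eq_of_eqOn_jsgNodes hvb hv'b hZ hwv hI)
  · exact Or.inr (eq_of_eqOn_jsgNodes hv'b hvb (fun j h h' => hZ j h' h)
      (jsgNodes_comm v v' ▸ hwv') fun j h h' => hI j h' h)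

theorem card_le_sum_mulVec (hw : w ∈ integerCovers A) (T : Finset (Fin m)) :
    (#T : ℝ) ≤ ∑ t ∈ T, (A *ᵥ w) t := by
  simpa using Finset.card_nsmul_le_sum T _ 1 fun t _ => hw.2 t

theorem card_le_sum_mulVec_add_sum (hw : w ∈ integerCovers A) (T : Finset (Fin m))
    (Z : Finset (Fin n)) : (#T : ℝ) ≤ ∑ t ∈ T, (A *ᵥ w) t + ∑ j ∈ Z, w j := by
  linarith [card_le_sum_mulVec hw T,
    Finset.sum_nonneg fun j (_ : j ∈ Z) => nonneg_of_mem_integerCovers hw j]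

theorem sum_mulVec_add_sum_eq_card_iff (hw : w ∈ integerCovers A) (T : Finset (Fin m))
    (Z : Finset (Fin n)) : ∑ t ∈ T, (A *ᵥ w) t + ∑ j ∈ Z, w j = #T ↔
      (∀ t ∈ T, (A *ᵥ w) t = 1) ∧ ∀ j ∈ Z, w j = 0 := by
  have hT := Finset.sum_eq_sum_iff_of_le (f := fun _ => (1 : ℝ)) fun t (_ : t ∈ T) => hw.2 t
  have hZ := Finset.sum_eq_zero_iff_of_nonneg fun j (_ : j ∈ Z) => nonneg_of_mem_integerCovers hw j
  have hZ₀ : 0 ≤ ∑ j ∈ Z, w j := Finset.sum_nonneg fun j _ => nonneg_of_mem_integerCovers hw j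
  have hT₁ := card_le_sum_mulVec hw T
  simp only [Finset.sum_const, nsmul_eq_mul, mul_one] at hT
  constructor
  · intro h
    exact ⟨fun t ht => (hT.1 (by linarith) t ht).symm, hZ.1 (by linarith)⟩
  · rintro ⟨h, h'⟩
    rw [Finset.sum_congr rfl h, Finset.sum_eq_zero h']
    simp

theorem isExtreme_segment_of_JSGConnected (hA : IsBinaryMatrix A)
    (h2 : ∀ t, (rowSupp A t).ncard = 2) (hv : IsVertex (Qstar A) v)
    (hv' : IsVertex (Qstar A) v') (hcon : JSGConnected A v v') :
    IsExtreme ℝ (Qstar A) (segment ℝ v v') := by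
  classical
  have hvb := isBinaryVec_of_isVertex hA hv
  have hv'b := isBinaryVec_of_isVertex hA hv'
  let T := univ.filter fun t => (A *ᵥ v) t = 1 ∧ (A *ᵥ v') t = 1
  let Z := univ.filter fun j => v j = 0 ∧ v' j = 0
  let I := univ.filter fun j => v j ≠ 0 ∧ v' j ≠ 0
  -- `g ≥ #T` cuts out the covers tight on `T` and vanishing on `Z`; on those, `h ≥ #I`
  -- cuts out `{v, v'}`.
  let g : (Fin n → ℝ) →ₗ[ℝ] ℝ :=
    ∑ t ∈ T, LinearMap.proj t ∘ₗ A.mulVecLin + ∑ j ∈ Z, LinearMap.proj j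
  let h : (Fin n → ℝ) →ₗ[ℝ] ℝ := ∑ j ∈ I, LinearMap.proj j
  have hg : ∀ x, g x = ∑ t ∈ T, (A *ᵥ x) t + ∑ j ∈ Z, x j := fun x => by simp [g]
  have hh : ∀ x, h x = ∑ j ∈ I, x j := fun x => by simp [h]
  let S₁ := integerCovers A ∩ {x | g x = #T}
  have hS₁ : ∀ w ∈ S₁, (∀ t, (A *ᵥ v) t = 1 → (A *ᵥ v') t = 1 → (A *ᵥ w) t = 1) ∧
      ∀ j, v j = 0 → v' j = 0 → w j = 0 := by
    rintro w ⟨hw, hgw⟩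
    obtain ⟨hT, hZ⟩ := (sum_mulVec_add_sum_eq_card_iff hw T Z).1 ((hg w).symm.trans hgw)
    exact ⟨fun t h h' => hT t (by simp [T, h, h']), fun j h h' => hZ j (by simp [Z, h, h'])⟩
  have hI₁ : ∀ w ∈ S₁, ∀ j ∈ I, 1 ≤ w j := fun w hw j hj =>
    one_le_of_tight hA h2 hv hv' hcon hw.1 (hS₁ w hw).1 (hS₁ w hw).2 (mem_filter.1 hj).2.1
      (mem_filter.1 hj).2.2
  have hmem : ∀ u ∈ integerCovers A, (∀ t ∈ T, (A *ᵥ u) t = 1) → (∀ j ∈ Z, u j = 0) →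
      (∀ j ∈ I, u j = 1) → u ∈ S₁ ∩ {x | h x = #I} := fun u hu hT hZ hI =>
    ⟨⟨hu, (hg u).trans ((sum_mulVec_add_sum_eq_card_iff hu T Z).2 ⟨hT, hZ⟩)⟩,
      by simp [hh, Finset.sum_congr rfl hI]⟩
  have hS₂ : S₁ ∩ {x | h x = #I} = {v, v'} := by
    ext w
    constructor
    · rintro ⟨hw, hhw⟩
      have hI := (Finset.sum_eq_sum_iff_of_le (hI₁ w hw)).1 (by simpa [hh] using hhw.symm)
      exact eq_or_eq_of_tight hA h2 hv hv' hcon hw.1 (hS₁ w hw).1 (hS₁ w hw).2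
        fun j h h' => (hI j (by simp [I, h, h'])).symm
    · rintro (rfl | rfl)
      · exact hmem w (mem_integerCovers_of_isVertex hv) (fun t ht => (mem_filter.1 ht).2.1)
          (fun j hj => (mem_filter.1 hj).2.1) fun j hj =>
            (hvb j).resolve_left (mem_filter.1 hj).2.1
      · exact hmem w (mem_integerCovers_of_isVertex hv') (fun t ht => (mem_filter.1 ht).2.2)
          (fun j hj => (mem_filter.1 hj).2.2) fun j hj =>
            (hv'b j).resolve_left (mem_filter.1 hj).2.2
  have hgS : ∀ x ∈ integerCovers A, (#T : ℝ) ≤ g x := fun x hx =>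
    (hg x).symm ▸ card_le_sum_mulVec_add_sum hx T Z
  have hhS : ∀ x ∈ S₁, (#I : ℝ) ≤ h x := fun x hx => by
    simpa [hh] using Finset.card_nsmul_le_sum I _ 1 (hI₁ x hx)
  rw [Qstar_eq_convexHull_integerCovers, ← convexHull_pair, ← hS₂]
  exact (isExtreme_convexHull_inter_of_forall_le hgS).trans
    (isExtreme_convexHull_inter_of_forall_le hhS)

end Connected

/-- for matrices with exactly two ones per row, adjacency in `Q*(A)` is
equivalent to connectivity of the joint saturation graph. -/
theorem stmt4 {m n : ℕ} (A : Matrix (Fin m) (Fin n) ℝ) (hA : IsBinaryMatrix A)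
    (h2 : ∀ t, (rowSupp A t).ncard = 2)
    (v v' : Fin n → ℝ) (hne : v ≠ v')
    (hv : IsVertex (Qstar A) v) (hv' : IsVertex (Qstar A) v') :
    AdjacentVerts (Qstar A) v v' ↔ JSGConnected A v v' :=
  ⟨fun hadj => JSGConnected_of_isExtreme_segment hA h2 (mem_integerCovers_of_isVertex hv)
      (mem_integerCovers_of_isVertex hv') hadj.2.2.2,
    fun hcon => ⟨hne, hv, hv', isExtreme_segment_of_JSGConnected hA h2 hv hv' hcon⟩⟩
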